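/- arXiv:2004.04957 — 10 statements merged into one kernel-verified Lean document; each statement's English description precedes it below -/
import Mathlib

section
/- Let φ : [0,∞) → ℝ be continuously differentiable and suppose there exists φ₀ > 0 such that φ(s) + 2s·φ'(s) ≥ φ₀ for all s ≥ 0. Then for every m with −φ₀ < m < 0, the map t ↦ Φ(t²/2) + (m/2)·t² is strictly convex on ℝ, where Φ(s) = ∫₀^s φ(τ) dτ. -/
open Set intervalIntegral

/-!
With `f(t) = Φ(t²/2) + (m/2)t²` the chain rule gives `f'(t) = φ(t²/2)·t + m·t` and
`f''(t) = φ(s) + 2s·φ'(s) + m` at `s = t²/2 ≥ 0`, which is at least `φ₀ + m > 0`. Only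
one-sided derivatives of `φ` and `Φ` at `s = 0` are available, but this suffices because
`t ↦ t²/2` takes values in `[0, ∞)`.
-/

theorem hasDerivWithinAt_integral_Ici {E : Type*} [NormedAddCommGroup E] [NormedSpace ℝ E]
    [CompleteSpace E] {f : ℝ → E} {a b : ℝ} (hf : ContinuousOn f (Ici a)) (hb : a ≤ b) :
    HasDerivWithinAt (fun u => ∫ x in a..u, f x) (f b) (Ici a) b := by
  have hint : IntervalIntegrable f MeasureTheory.volume a b :=
    (hf.mono fun x hx => (uIcc_of_le hb ▸ hx).1).intervalIntegrable
  have hmeas : ∀ l, Ici a ∈ l → StronglyMeasurableAtFilter f l :=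
    fun _ hl => ⟨Ici a, hl, hf.aestronglyMeasurable measurableSet_Ici⟩
  rcases hb.eq_or_lt with rfl | hab
  · exact integral_hasDerivWithinAt_right hint
      (hmeas _ (Filter.mem_of_superset self_mem_nhdsWithin Ioi_subset_Ici_self))
      ((hf a self_mem_Ici).mono Ioi_subset_Ici_self)
  · have hnhds : Ici a ∈ nhds b := Ici_mem_nhds hab
    exact (integral_hasDerivAt_right hint (hmeas _ hnhds)
      (hf.continuousAt hnhds)).hasDerivWithinAt

theorem HasDerivWithinAt.comp_sq_half {f : ℝ → ℝ} {f' t : ℝ}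
    (hf : HasDerivWithinAt f f' (Ici 0) (t ^ 2 / 2)) :
    HasDerivAt (fun t => f (t ^ 2 / 2)) (f' * t) t := by
  have hsq : HasDerivAt (fun t : ℝ => t ^ 2 / 2) t t := by
    simpa using (hasDerivAt_pow 2 t).div_const 2
  exact hf.comp_hasDerivAt t hsq (Filter.Eventually.of_forall fun x => by
    simp only [mem_Ici]; positivity)

theorem strictConvexOn_univ_of_hasDerivAt_of_hasDerivAt_pos {f f' f'' : ℝ → ℝ}
    (hf : ∀ x, HasDerivAt f (f' x) x) (hf' : ∀ x, HasDerivAt f' (f'' x) x)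
    (hf'' : ∀ x, 0 < f'' x) : StrictConvexOn ℝ univ f := by
  have hderiv : deriv f = f' := funext fun x => (hf x).deriv
  refine StrictMono.strictConvexOn_univ_of_deriv
    (continuous_iff_continuousAt.2 fun x => (hf x).continuousAt) ?_
  rw [hderiv]
  exact strictMono_of_deriv_pos fun x => (hf' x).deriv ▸ hf'' x

theorem strictConvex_shifted_of_phi3_general
    (φ φ' : ℝ → ℝ) (φ₀ : ℝ)
    (hderiv : ∀ s ∈ Set.Ici (0:ℝ), HasDerivWithinAt φ (φ' s) (Set.Ici 0) s)
    (h : ∀ s ∈ Set.Ici (0:ℝ), φ₀ ≤ φ s + 2 * s * φ' s)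
    (Φ : ℝ → ℝ) (hΦ : ∀ s : ℝ, Φ s = ∫ τ in (0:ℝ)..s, φ τ) :
    ∀ m : ℝ, -φ₀ < m → m < 0 →
      StrictConvexOn ℝ Set.univ (fun t : ℝ => Φ (t ^ 2 / 2) + m / 2 * t ^ 2) := by
  intro m hm _
  have hsq_nonneg (t : ℝ) : 0 ≤ t ^ 2 / 2 := by positivity
  have hΦderiv (t : ℝ) : HasDerivWithinAt Φ (φ (t ^ 2 / 2)) (Ici 0) (t ^ 2 / 2) := by
    rw [funext hΦ]
    exact hasDerivWithinAt_integral_Ici (fun s hs => (hderiv s hs).continuousWithinAt)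
      (hsq_nonneg t)
  refine strictConvexOn_univ_of_hasDerivAt_of_hasDerivAt_pos
    (f' := fun t => φ (t ^ 2 / 2) * t + m * t)
    (f'' := fun t => φ (t ^ 2 / 2) + 2 * (t ^ 2 / 2) * φ' (t ^ 2 / 2) + m)
    (fun t => ?_) (fun t => ?_) (fun t => ?_)
  · refine ((hΦderiv t).comp_sq_half.add
      ((hasDerivAt_pow 2 t).const_mul (m / 2))).congr_deriv ?_
    ring
  · refine (((hderiv _ (hsq_nonneg t)).comp_sq_half.mul (hasDerivAt_id t)).add
      ((hasDerivAt_id t).const_mul m)).congr_deriv ?_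
    simp only [id]
    ring
  · linarith [h _ (hsq_nonneg t)]

/-- If `φ` is `C¹` on `[0,∞)` and `φ(s) + 2s·φ'(s) ≥ φ₀ > 0` for all `s ≥ 0`,
then for every `m ∈ (−φ₀, 0)` the map `t ↦ Φ(t²/2) + (m/2)t²` is strictly convex
on `ℝ`, where `Φ(s) = ∫₀^s φ`. -/
theorem strictConvex_shifted_of_phi3
    (φ φ' : ℝ → ℝ) (φ₀ : ℝ) (hφ₀ : 0 < φ₀)
    (hderiv : ∀ s ∈ Set.Ici (0:ℝ), HasDerivWithinAt φ (φ' s) (Set.Ici 0) s)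
    (hderivcont : ContinuousOn φ' (Set.Ici 0))
    (h : ∀ s ∈ Set.Ici (0:ℝ), φ₀ ≤ φ s + 2 * s * φ' s)
    (Φ : ℝ → ℝ) (hΦ : ∀ s : ℝ, Φ s = ∫ τ in (0:ℝ)..s, φ τ) :
    ∀ m : ℝ, -φ₀ < m → m < 0 →
      StrictConvexOn ℝ Set.univ (fun t : ℝ => Φ (t ^ 2 / 2) + m / 2 * t ^ 2) :=
  strictConvex_shifted_of_phi3_general φ φ' φ₀ hderiv h Φ hΦ
end

section
/- Let X be a finite-dimensional real Hilbert space with inner product ⟨·,·⟩ and norm |·|. Suppose β : X → X is a continuous function which is strictly monotone, i.e. ⟨β(ξ) − β(ξ̄), ξ − ξ̄⟩ > 0 for every ξ, ξ̄ ∈ X with ξ ≠ ξ̄. Let {ξₙ} ⊂ X be a sequence and ξ ∈ X be such that ⟨β(ξₙ) − β(ξ), ξₙ − ξ⟩ → 0 as n → +∞. Then ξₙ converges to ξ in X. -/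
/-!
Write `g(h) = ⟪β(ξ₀ + h) − β(ξ₀), h⟫`. Monotonicity makes `t ↦ ⟪β(ξ₀ + t • u), u⟫` nondecreasing,
so `g(t • u) ≥ t g(u)` for `t ≥ 1`: outside the ball of radius `ε`, `g` is bounded below by its
minimum over the sphere of radius `ε`, which exists by compactness and is positive by strict
monotonicity. Hence `g(ξₙ − ξ₀) → 0` forces `‖ξₙ − ξ₀‖ < ε` eventually.
-/

open scoped RealInnerProductSpace

section MonotoneOperator

variable {X : Type*} [NormedAddCommGroup X] [InnerProductSpace ℝ X] {β : X → X}

theorem inner_le_inner_along_ray (hmono : ∀ x y : X, 0 ≤ ⟪β x - β y, x - y⟫) (x₀ u : X)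
    {s t : ℝ} (hst : s ≤ t) : ⟪β (x₀ + s • u), u⟫ ≤ ⟪β (x₀ + t • u), u⟫ := by
  rcases hst.eq_or_lt with rfl | hlt
  · rfl
  have key := hmono (x₀ + t • u) (x₀ + s • u)
  rw [add_sub_add_left_eq_sub, ← sub_smul, real_inner_smul_right, inner_sub_left] at key
  linarith [nonneg_of_mul_nonneg_right key (sub_pos.2 hlt)]

theorem mul_inner_le_inner_smul (hmono : ∀ x y : X, 0 ≤ ⟪β x - β y, x - y⟫) (x₀ u : X)
    {t : ℝ} (ht : 1 ≤ t) :
    t * ⟪β (x₀ + u) - β x₀, u⟫ ≤ ⟪β (x₀ + t • u) - β x₀, t • u⟫ := by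
  have hray := inner_le_inner_along_ray hmono x₀ u ht
  rw [one_smul] at hray
  rw [real_inner_smul_right, inner_sub_left, inner_sub_left]
  gcongr

theorem exists_pos_le_inner_of_le_norm_sub [FiniteDimensional ℝ X] (hβc : Continuous β)
    (hmono : ∀ x y : X, x ≠ y → 0 < ⟪β x - β y, x - y⟫) (x₀ : X) {ε : ℝ} (hε : 0 < ε) :
    ∃ c > 0, ∀ x, ε ≤ ‖x - x₀‖ → c ≤ ⟪β x - β x₀, x - x₀⟫ := by
  rcases subsingleton_or_nontrivial X with hX | hX
  · refine ⟨1, one_pos, fun x hx => ?_⟩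
    rw [Subsingleton.elim x x₀, sub_self, norm_zero] at hx
    exact absurd hx hε.not_ge
  have hmono' : ∀ x y : X, 0 ≤ ⟪β x - β y, x - y⟫ := fun x y => by
    rcases eq_or_ne x y with rfl | hne
    · simp
    · exact (hmono x y hne).le
  set g : X → ℝ := fun h => ⟪β (x₀ + h) - β x₀, h⟫
  have hg : Continuous g := by fun_prop
  obtain ⟨u₀, hu₀, hmin⟩ := (isCompact_sphere (0 : X) ε).exists_isMinOn
    (NormedSpace.sphere_nonempty.2 hε.le) hg.continuousOn
  have hu₀ne : u₀ ≠ 0 := ne_zero_of_mem_sphere hε.ne' ⟨u₀, hu₀⟩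
  have hc : 0 < g u₀ := by
    simpa [g] using hmono (x₀ + u₀) x₀ (by simpa using hu₀ne)
  refine ⟨g u₀, hc, fun x hx => ?_⟩
  set h := x - x₀
  set t := ‖h‖ / ε
  have ht : 1 ≤ t := (one_le_div hε).2 hx
  have hu : t⁻¹ • h ∈ Metric.sphere (0 : X) ε := by
    rw [mem_sphere_zero_iff_norm, norm_smul, norm_inv, Real.norm_of_nonneg (by positivity)]
    field_simp
    exact (div_mul_cancel₀ _ hε.ne').symm
  have hgu : g u₀ ≤ g (t⁻¹ • h) := hmin hu
  have hscale := mul_inner_le_inner_smul hmono' x₀ (t⁻¹ • h) ht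
  rw [smul_inv_smul₀ (by positivity), add_sub_cancel] at hscale
  calc g u₀ ≤ g (t⁻¹ • h) := hgu
    _ ≤ t * g (t⁻¹ • h) := le_mul_of_one_le_left (hc.le.trans hgu) ht
    _ ≤ ⟪β x - β x₀, h⟫ := hscale

end MonotoneOperator

/-- Monotone operator convergence lemma (Proposition 2.1): if `β : X → X` is
continuous and strictly monotone on a finite-dimensional real Hilbert space `X`,
and `⟨β(ξₙ) − β(ξ), ξₙ − ξ⟩ → 0`, then `ξₙ → ξ`. -/
theorem tendsto_of_strictly_monotone
    {X : Type*} [NormedAddCommGroup X] [InnerProductSpace ℝ X]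
    [FiniteDimensional ℝ X]
    (β : X → X) (hβc : Continuous β)
    (hmono : ∀ ξ ζ : X, ξ ≠ ζ → 0 < ⟪β ξ - β ζ, ξ - ζ⟫)
    (ξ : ℕ → X) (ξ₀ : X)
    (hconv : Filter.Tendsto (fun n => ⟪β (ξ n) - β ξ₀, ξ n - ξ₀⟫)
      Filter.atTop (nhds 0)) :
    Filter.Tendsto ξ Filter.atTop (nhds ξ₀) := by
  refine Metric.tendsto_nhds.2 fun ε hε => ?_
  obtain ⟨c, hc, hbound⟩ := exists_pos_le_inner_of_le_norm_sub hβc hmono ξ₀ hε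
  filter_upwards [hconv.eventually (gt_mem_nhds hc)] with n hn
  rw [dist_eq_norm]
  by_contra! hfar
  exact (hbound (ξ n) hfar).not_gt hn
end

section
/- Let X be a finite-dimensional real inner product space with inner product ⟨·,·⟩ and norm |·|. Let φ : [0,∞) → ℝ be continuous with φ(s) > 0 for all s ≥ 0, and suppose the map t ↦ t·φ(t²/2) is strictly increasing on [0,∞). Define β : X → X by β(ξ) = φ(|ξ|²/2)·ξ/√2. Then β is strictly monotone, i.e. ⟨β(ξ) − β(ξ̄), ξ − ξ̄⟩ > 0 for every ξ, ξ̄ ∈ X with ξ ≠ ξ̄. -/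
open scoped RealInnerProductSpace

/-- Strict monotonicity of `β(ξ) = φ(|ξ|²/2)·ξ/√2` on a finite-dimensional real
inner product space, when `φ > 0` is continuous and `t ↦ t·φ(t²/2)` is strictly
increasing on `[0,∞)` (estimate (2.6) of the paper). -/
theorem beta_strictly_monotone
    {X : Type*} [NormedAddCommGroup X] [InnerProductSpace ℝ X]
    [FiniteDimensional ℝ X]
    (φ : ℝ → ℝ) (hφc : ContinuousOn φ (Set.Ici 0))
    (hφpos : ∀ s ∈ Set.Ici (0:ℝ), 0 < φ s)
    (hmono : StrictMonoOn (fun t : ℝ => t * φ (t ^ 2 / 2)) (Set.Ici 0))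
    (β : X → X) (hβ : ∀ ξ : X, β ξ = (φ (‖ξ‖ ^ 2 / 2) / Real.sqrt 2) • ξ) :
    ∀ ξ ζ : X, ξ ≠ ζ → 0 < ⟪β ξ - β ζ, ξ - ζ⟫ := by
  intro ξ ζ hne
  set a := ‖ξ‖ with ha
  set b := ‖ζ‖ with hb
  set c := ⟪ξ, ζ⟫ with hc
  set p := φ (a ^ 2 / 2) with hp
  set q := φ (b ^ 2 / 2) with hq
  have ha0 : (0:ℝ) ≤ a := norm_nonneg _
  have hb0 : (0:ℝ) ≤ b := norm_nonneg _
  have hppos : 0 < p := hφpos _ (Set.mem_Ici.mpr (by positivity))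
  have hqpos : 0 < q := hφpos _ (Set.mem_Ici.mpr (by positivity))
  have hs2 : (0:ℝ) < Real.sqrt 2 := by positivity
  have expand : ⟪β ξ - β ζ, ξ - ζ⟫ =
      (p * a ^ 2 + q * b ^ 2 - (p + q) * c) / Real.sqrt 2 := by
    rw [hβ, hβ]
    rw [inner_sub_left, inner_sub_right, inner_sub_right,
      real_inner_smul_left, real_inner_smul_left, real_inner_smul_left,
      real_inner_smul_left, real_inner_self_eq_norm_sq, real_inner_self_eq_norm_sq,
      real_inner_comm ξ ζ]
    rw [← ha, ← hb, ← hc, ← hp, ← hq]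
    ring
  rw [expand]
  apply div_pos _ hs2
  rcases eq_or_ne a b with hab | hab
  · have hpq : p = q := by rw [hp, hq, hab]
    have hnsq : (0:ℝ) < ‖ξ - ζ‖ ^ 2 := by
      have h0 : ξ - ζ ≠ 0 := sub_ne_zero.mpr hne
      exact pow_pos (norm_pos_iff.mpr h0) 2
    have hexp : ‖ξ - ζ‖ ^ 2 = a ^ 2 - 2 * c + b ^ 2 := by
      rw [ha, hb, hc]; exact norm_sub_sq_real ξ ζ
    have : p * a ^ 2 + q * b ^ 2 - (p + q) * c = p * ‖ξ - ζ‖ ^ 2 := by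
      rw [hexp, hpq]; ring
    rw [this]
    exact mul_pos hppos hnsq
  · have hcab : c ≤ a * b := real_inner_le_norm ξ ζ
    have key : 0 < (p * a - q * b) * (a - b) := by
      rcases lt_or_gt_of_ne hab with h | h
      · have hf := hmono (Set.mem_Ici.mpr ha0) (Set.mem_Ici.mpr hb0) h
        simp only at hf
        have h1 : p * a - q * b < 0 := by rw [hp, hq]; nlinarith
        have h2 : a - b < 0 := by linarith
        exact mul_pos_of_neg_of_neg h1 h2
      · have hf := hmono (Set.mem_Ici.mpr hb0) (Set.mem_Ici.mpr ha0) h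
        simp only at hf
        have h1 : 0 < p * a - q * b := by rw [hp, hq]; nlinarith
        have h2 : 0 < a - b := by linarith
        exact mul_pos h1 h2
    nlinarith [add_pos hppos hqpos]
end

section
/- Let N ≥ 3 be an integer, let φ : [0,∞) → ℝ be continuously differentiable with φ(s) ≥ φ₀ > 0 and φ'(s) ≤ 0 for all s ≥ 0, and let Φ(s) = ∫₀^s φ(τ) dτ. Then for every s ∈ ℝ and every b > 0, Φ((s² + b²)/2) − (1/N)·φ((s² + b²)/2)·b² ≥ Φ(s²/2) + ((N−2)·φ₀/(2N))·b²; in particular Φ((s² + b²)/2) − (1/N)·φ((s² + b²)/2)·b² > Φ(s²/2). -/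
open Set intervalIntegral

/-!
Since `φ' ≤ 0`, `φ` is nonincreasing, so with `a = s²/2 ≤ c = (s²+b²)/2` we get
`Φ(c) - Φ(a) = ∫_a^c φ ≥ (c - a) φ(c) = φ(c) b²/2`. Subtracting `φ(c) b²/N` leaves
`((N-2)/(2N)) φ(c) b²`, which is at least `((N-2)/(2N)) φ₀ b²` because `φ(c) ≥ φ₀` and `N ≥ 2`.
-/

theorem AntitoneOn.sub_mul_le_integral {f : ℝ → ℝ} {a c : ℝ} (hf : AntitoneOn f (Icc a c))
    (hac : a ≤ c) : (c - a) * f c ≤ ∫ x in a..c, f x := by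
  have hc : c ∈ Icc a c := right_mem_Icc.mpr hac
  calc (c - a) * f c = ∫ _ in a..c, f c := by simp
    _ ≤ ∫ x in a..c, f x :=
      integral_mono_on hac intervalIntegrable_const
        (AntitoneOn.intervalIntegrable (by rwa [uIcc_of_le hac])) fun x hx => hf hx hc hx.2

theorem AntitoneOn.sub_mul_le_integral_sub_integral {f : ℝ → ℝ} {a c : ℝ}
    (hf : AntitoneOn f (Ici 0)) (ha : 0 ≤ a) (hac : a ≤ c) :
    (c - a) * f c ≤ (∫ x in (0 : ℝ)..c, f x) - ∫ x in (0 : ℝ)..a, f x := by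
  have hint : ∀ {y}, 0 ≤ y → IntervalIntegrable f MeasureTheory.volume 0 y := fun hy =>
    (hf.mono (by rw [uIcc_of_le hy]; exact Icc_subset_Ici_self)).intervalIntegrable
  rw [integral_interval_sub_left (hint (ha.trans hac)) (hint ha)]
  exact (hf.mono fun x hx => ha.trans hx.1).sub_mul_le_integral hac

theorem pohozaev_integrand_lower_bound_general
    (N : ℕ) (hN : 3 ≤ N)
    (φ φ' : ℝ → ℝ) (φ₀ : ℝ) (hφ₀ : 0 < φ₀)
    (hderiv : ∀ s ∈ Set.Ici (0:ℝ), HasDerivWithinAt φ (φ' s) (Set.Ici 0) s)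
    (hlow : ∀ s ∈ Set.Ici (0:ℝ), φ₀ ≤ φ s)
    (hneg : ∀ s ∈ Set.Ici (0:ℝ), φ' s ≤ 0)
    (Φ : ℝ → ℝ) (hΦ : ∀ s : ℝ, Φ s = ∫ τ in (0:ℝ)..s, φ τ) :
    ∀ (s b : ℝ), 0 < b →
      (Φ (s ^ 2 / 2) + (((N : ℝ) - 2) * φ₀ / (2 * (N : ℝ))) * b ^ 2 ≤
        Φ ((s ^ 2 + b ^ 2) / 2) - (1 / (N : ℝ)) * φ ((s ^ 2 + b ^ 2) / 2) * b ^ 2) ∧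
      Φ (s ^ 2 / 2) <
        Φ ((s ^ 2 + b ^ 2) / 2) - (1 / (N : ℝ)) * φ ((s ^ 2 + b ^ 2) / 2) * b ^ 2 := by
  intro s b hb
  have hanti : AntitoneOn φ (Ici 0) :=
    antitoneOn_of_hasDerivWithinAt_nonpos (convex_Ici 0)
      (fun x hx => (hderiv x hx).continuousWithinAt)
      (fun x hx => (hderiv x (interior_subset hx)).mono interior_subset)
      fun x hx => hneg x (interior_subset hx)
  set c := (s ^ 2 + b ^ 2) / 2 with hc
  have hac : s ^ 2 / 2 ≤ c := by rw [hc]; linarith [sq_nonneg b]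
  have hgap : b ^ 2 / 2 * φ c ≤ Φ c - Φ (s ^ 2 / 2) := by
    rw [hΦ, hΦ, show b ^ 2 / 2 = c - s ^ 2 / 2 by ring]
    exact hanti.sub_mul_le_integral_sub_integral (by positivity) hac
  have hN' : (3 : ℝ) ≤ N := by exact_mod_cast hN
  have hφc : φ₀ ≤ φ c := hlow c ((by positivity : (0 : ℝ) ≤ s ^ 2 / 2).trans hac)
  have hbound : Φ (s ^ 2 / 2) + ((N - 2) * φ₀ / (2 * N)) * b ^ 2 ≤
      Φ c - (1 / N) * φ c * b ^ 2 :=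
    calc Φ (s ^ 2 / 2) + ((N - 2) * φ₀ / (2 * N)) * b ^ 2
        ≤ Φ (s ^ 2 / 2) + ((N - 2) * φ c / (2 * N)) * b ^ 2 := by
          gcongr; linarith
      _ = Φ (s ^ 2 / 2) + b ^ 2 / 2 * φ c - (1 / N) * φ c * b ^ 2 := by
          field_simp; ring
      _ ≤ Φ c - (1 / N) * φ c * b ^ 2 := by linarith
  refine ⟨hbound, lt_of_lt_of_le ?_ hbound⟩
  have hmargin : 0 < ((N - 2) * φ₀ / (2 * N)) * b ^ 2 := by
    have : (0 : ℝ) < N - 2 := by linarith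
    positivity
  linarith

/-- Quantitative form of inequality (6.1): for `φ` of class `C¹` on `[0,∞)`
with `φ ≥ φ₀ > 0` and `φ' ≤ 0`, for every `s ∈ ℝ` and `b > 0`,
`Φ((s²+b²)/2) − (1/N)φ((s²+b²)/2)b² ≥ Φ(s²/2) + ((N−2)φ₀/(2N))b²
 > Φ(s²/2)`. -/
theorem pohozaev_integrand_lower_bound
    (N : ℕ) (hN : 3 ≤ N)
    (φ φ' : ℝ → ℝ) (φ₀ : ℝ) (hφ₀ : 0 < φ₀)
    (hderiv : ∀ s ∈ Set.Ici (0:ℝ), HasDerivWithinAt φ (φ' s) (Set.Ici 0) s)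
    (hderivcont : ContinuousOn φ' (Set.Ici 0))
    (hlow : ∀ s ∈ Set.Ici (0:ℝ), φ₀ ≤ φ s)
    (hneg : ∀ s ∈ Set.Ici (0:ℝ), φ' s ≤ 0)
    (Φ : ℝ → ℝ) (hΦ : ∀ s : ℝ, Φ s = ∫ τ in (0:ℝ)..s, φ τ) :
    ∀ (s b : ℝ), 0 < b →
      (Φ (s ^ 2 / 2) + (((N : ℝ) - 2) * φ₀ / (2 * (N : ℝ))) * b ^ 2 ≤
        Φ ((s ^ 2 + b ^ 2) / 2) - (1 / (N : ℝ)) * φ ((s ^ 2 + b ^ 2) / 2) * b ^ 2) ∧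
      Φ (s ^ 2 / 2) <
        Φ ((s ^ 2 + b ^ 2) / 2) - (1 / (N : ℝ)) * φ ((s ^ 2 + b ^ 2) / 2) * b ^ 2 :=
  pohozaev_integrand_lower_bound_general N hN φ φ' φ₀ hφ₀ hderiv hlow hneg Φ hΦ
end

section
/- Let N ≥ 1 and let P, Q : ℝ → ℝ be continuous functions such that Q(s) ≠ 0 for all sufficiently large |s| and P(s)/Q(s) → 0 as |s| → +∞. Suppose {vₙ} is a sequence of measurable functions from ℝᴺ to ℝ and v : ℝᴺ → ℝ is measurable, such that supₙ ∫_{ℝᴺ} |Q(vₙ(x))| dx < +∞ and P(vₙ(x)) → v(x) almost everywhere in ℝᴺ. Then for every bounded Borel set B ⊂ ℝᴺ, ∫_B |P(vₙ(x)) − v(x)| dx → 0 as n → +∞. -/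
/-!
Since `P/Q → 0` at infinity and `P` is bounded on compacts, for every `ε > 0` there is `K` with
`|P s| ≤ ε |Q s| + K` for all `s`. Hence on `{|P(vₙ)| ≥ 2K}` one has `|P(vₙ)| ≤ 2ε |Q(vₙ)|`, whose
integral is at most `2ε sup ∫ |Q(vₙ)|`: the sequence `P(vₙ)` is uniformly integrable on every set
of finite measure, and Vitali's convergence theorem turns a.e. convergence into `L¹` convergence.
-/

open MeasureTheory Filter Topology
open scoped ENNReal NNReal

theorem exists_abs_le_mul_abs_add_of_tendsto_div {X : Type*} [TopologicalSpace X] {P Q : X → ℝ}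
    (hP : Continuous P) (hQ : ∀ᶠ s in cocompact X, Q s ≠ 0)
    (hlim : Tendsto (fun s => P s / Q s) (cocompact X) (𝓝 0)) {ε : ℝ} (hε : 0 < ε) :
    ∃ K : ℝ, ∀ s, |P s| ≤ ε * |Q s| + K := by
  have hfar : ∀ᶠ s in cocompact X, |P s| ≤ ε * |Q s| := by
    filter_upwards [hQ, hlim.eventually (Metric.ball_mem_nhds 0 hε)] with s hQs hs
    rw [Real.dist_0_eq_abs, abs_div, div_lt_iff₀ (abs_pos.mpr hQs)] at hs
    exact hs.le
  obtain ⟨L, hL, hLfar⟩ := mem_cocompact.mp hfar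
  obtain ⟨K, hK⟩ := hL.exists_bound_of_continuousOn hP.continuousOn
  refine ⟨max K 0, fun s => ?_⟩
  by_cases hs : s ∈ L
  · have := hK s hs
    rw [Real.norm_eq_abs] at this
    nlinarith [le_max_left K 0, abs_nonneg (Q s)]
  · have : |P s| ≤ ε * |Q s| := hLfar hs
    linarith [le_max_right K 0]

theorem uniformIntegrable_of_abs_le_mul_abs_add {ι α : Type*} {m : MeasurableSpace α}
    {μ : Measure α} [IsFiniteMeasure μ] {p : ℝ≥0∞} (hp : 1 ≤ p) (hp' : p ≠ ∞)
    {f g : ι → α → ℝ} (hf : ∀ i, AEStronglyMeasurable (f i) μ) {C : ℝ≥0}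
    (hg : ∀ i, eLpNorm (g i) p μ ≤ C)
    (hfg : ∀ ε : ℝ, 0 < ε → ∃ K : ℝ, ∀ i x, |f i x| ≤ ε * |g i x| + K) :
    UniformIntegrable f p μ := by
  refine uniformIntegrable_of hp hp' hf fun ε hε => ?_
  set η := ε / (2 * (C + 1)) with hη
  have hη_pos : 0 < η := by positivity
  obtain ⟨K, hK⟩ := hfg η hη_pos
  refine ⟨(2 * K).toNNReal, fun i => ?_⟩
  have hpt : ∀ x, ‖{x | (2 * K).toNNReal ≤ ‖f i x‖₊}.indicator (f i) x‖ ≤ ‖((2 * η) • g i) x‖ := by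
    intro x
    by_cases hx : x ∈ {x | (2 * K).toNNReal ≤ ‖f i x‖₊}
    · rw [Set.indicator_of_mem hx, Pi.smul_apply, smul_eq_mul, Real.norm_eq_abs, Real.norm_eq_abs,
        abs_mul, abs_of_pos (by positivity : 0 < 2 * η)]
      rw [Set.mem_ofPred_eq, Real.toNNReal_le_iff_le_coe, coe_nnnorm, Real.norm_eq_abs] at hx
      linarith [hK i x]
    · rw [Set.indicator_of_notMem hx, norm_zero]
      exact norm_nonneg _
  calc eLpNorm ({x | (2 * K).toNNReal ≤ ‖f i x‖₊}.indicator (f i)) p μ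
      ≤ eLpNorm ((2 * η) • g i) p μ := eLpNorm_mono hpt
    _ = ENNReal.ofReal (2 * η) * eLpNorm (g i) p μ := by
      rw [eLpNorm_const_smul, Real.enorm_eq_ofReal (by positivity)]
    _ ≤ ENNReal.ofReal (2 * η) * ENNReal.ofReal (C + 1) := by
      gcongr
      refine (hg i).trans ?_
      rw [← ENNReal.ofReal_coe_nnreal]
      gcongr
      linarith
    _ = ENNReal.ofReal ε := by
      rw [← ENNReal.ofReal_mul (by positivity), hη]
      congr 1
      field_simp

theorem strauss_compactness_local_general
    (N : ℕ) (P Q : ℝ → ℝ)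
    (hP : Continuous P)
    (hQne : ∃ M : ℝ, ∀ s : ℝ, M ≤ |s| → Q s ≠ 0)
    (hlim : Tendsto (fun s => P s / Q s) (cocompact ℝ) (nhds 0))
    (v : ℕ → EuclideanSpace ℝ (Fin N) → ℝ) (w : EuclideanSpace ℝ (Fin N) → ℝ)
    (hv : ∀ n, Measurable (v n))
    (hbound : ∃ C : ℝ≥0∞, C < ⊤ ∧
      ∀ n, (∫⁻ x : EuclideanSpace ℝ (Fin N), ENNReal.ofReal |Q (v n x)|) ≤ C)
    (hae : ∀ᵐ x : EuclideanSpace ℝ (Fin N),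
      Tendsto (fun n => P (v n x)) atTop (nhds (w x))) :
    ∀ B : Set (EuclideanSpace ℝ (Fin N)), MeasurableSet B → Bornology.IsBounded B →
      Tendsto (fun n => ∫⁻ x in B, ENNReal.ofReal |P (v n x) - w x|)
        atTop (nhds 0) := by
  intro B _ hB
  have : IsFiniteMeasure (volume.restrict B) := isFiniteMeasure_restrict.mpr hB.measure_lt_top.ne
  obtain ⟨M, hM⟩ := hQne
  obtain ⟨C, hC, hCbound⟩ := hbound
  have hQ : ∀ᶠ s in cocompact ℝ, Q s ≠ 0 :=
    (tendsto_norm_cocompact_atTop.eventually_ge_atTop M).mono hM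
  have hPv : ∀ n, AEStronglyMeasurable (fun x => P (v n x)) (volume.restrict B) :=
    fun n => (hP.measurable.comp (hv n)).aestronglyMeasurable
  have hQv : ∀ n, eLpNorm (fun x => Q (v n x)) 1 (volume.restrict B) ≤ C.toNNReal := by
    intro n
    rw [ENNReal.coe_toNNReal hC.ne, eLpNorm_one_eq_lintegral_enorm]
    simp only [Real.enorm_eq_ofReal_abs]
    exact (setLIntegral_le_lintegral B _).trans (hCbound n)
  have hUI : UniformIntegrable (fun n x => P (v n x)) 1 (volume.restrict B) :=
    uniformIntegrable_of_abs_le_mul_abs_add le_rfl ENNReal.one_ne_top hPv hQv fun ε hε =>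
      (exists_abs_le_mul_abs_add_of_tendsto_div hP hQ hlim hε).imp fun _ hK _ x => hK (v _ x)
  have haeB := ae_restrict_of_ae (s := B) hae
  simpa [eLpNorm_one_eq_lintegral_enorm, Real.enorm_eq_ofReal_abs] using
    tendsto_Lp_finite_of_tendsto_ae le_rfl ENNReal.one_ne_top hPv
      (hUI.memLp_of_ae_tendsto haeB) hUI.unifIntegrable haeB

/-- Strauss compactness lemma, first part (Lemma 3.6): if `P(s)/Q(s) → 0` as
`|s| → ∞`, `∫|Q(vₙ)|` is uniformly bounded and `P(vₙ(x)) → v(x)` a.e., then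
`P(vₙ) → v` in `L¹(B)` for every bounded Borel set `B`. -/
theorem strauss_compactness_local
    (N : ℕ) (hN : 1 ≤ N) (P Q : ℝ → ℝ)
    (hP : Continuous P) (hQ : Continuous Q)
    (hQne : ∃ M : ℝ, ∀ s : ℝ, M ≤ |s| → Q s ≠ 0)
    (hlim : Tendsto (fun s => P s / Q s) (cocompact ℝ) (nhds 0))
    (v : ℕ → EuclideanSpace ℝ (Fin N) → ℝ) (w : EuclideanSpace ℝ (Fin N) → ℝ)
    (hv : ∀ n, Measurable (v n)) (hw : Measurable w)
    (hbound : ∃ C : ℝ≥0∞, C < ⊤ ∧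
      ∀ n, (∫⁻ x : EuclideanSpace ℝ (Fin N), ENNReal.ofReal |Q (v n x)|) ≤ C)
    (hae : ∀ᵐ x : EuclideanSpace ℝ (Fin N),
      Tendsto (fun n => P (v n x)) atTop (nhds (w x))) :
    ∀ B : Set (EuclideanSpace ℝ (Fin N)), MeasurableSet B → Bornology.IsBounded B →
      Tendsto (fun n => ∫⁻ x in B, ENNReal.ofReal |P (v n x) - w x|)
        atTop (nhds 0) :=
  strauss_compactness_local_general N P Q hP hQne hlim v w hv hbound hae
end

section
/- Let N ≥ 1 and let P, Q : ℝ → ℝ be continuous functions such that Q(s) ≠ 0 for all sufficiently large |s| and P(s)/Q(s) → 0 as |s| → +∞, and moreover Q(s) ≠ 0 for all sufficiently small |s| ≠ 0 and P(s)/Q(s) → 0 as s → 0. Suppose {vₙ} is a sequence of measurable functions from ℝᴺ to ℝ and v : ℝᴺ → ℝ is measurable, such that supₙ ∫_{ℝᴺ} |Q(vₙ(x))| dx < +∞, P(vₙ(x)) → v(x) almost everywhere in ℝᴺ, and supₙ |vₙ(x)| → 0 as |x| → +∞ (i.e. for every ε > 0 there exists R > 0 such that |vₙ(x)| ≤ ε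 for all n and all |x| ≥ R). Then ∫_{ℝᴺ} |P(vₙ(x)) − v(x)| dx → 0 as n → +∞. -/
open MeasureTheory Filter Topology Asymptotics
open scoped ENNReal NNReal

/-!
Write `fₙ = P ∘ vₙ`, `gₙ = Q ∘ vₙ`, so that `∫ |gₙ| ≤ C`. Since `P = o(Q)` at infinity and `P` is
bounded on compacts, for every `η > 0` there is `B` with `|fₙ| ≤ η |gₙ|` wherever `|fₙ| ≥ B`; this
makes `(fₙ)` uniformly integrable. Since `P = o(Q)` at `0` (the limit along `s ≠ 0` extends to
`s = 0` by continuity) and `vₙ → 0` uniformly at infinity, `|fₙ| ≤ η |gₙ|` outside a ball; this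
makes `(fₙ)` uniformly tight. Fatou's lemma puts the a.e. limit `w` in `L¹`, and Vitali's
convergence theorem gives `fₙ → w` in `L¹`.
-/

namespace Asymptotics

variable {α E F : Type*} [TopologicalSpace α] [NormedAddCommGroup E] [NormedAddCommGroup F]

theorem IsLittleO.nhds_of_nhdsNE {P : α → E} {Q : α → F} {a : α} [(𝓝[≠] a).NeBot]
    (hP : ContinuousAt P a) (hQ : ContinuousAt Q a) (h : P =o[𝓝[≠] a] Q) : P =o[𝓝 a] Q := by
  have hPa : P a = 0 := by
    have hQ_bdd : Q =O[𝓝[≠] a] fun _ => (1 : ℝ) := (hQ.mono_left nhdsWithin_le_nhds).isBigO_one ℝ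
    exact tendsto_nhds_unique (hP.mono_left nhdsWithin_le_nhds)
      ((isLittleO_one_iff ℝ).1 (h.trans_isBigO hQ_bdd))
  simpa [Set.insert_eq_of_mem, nhdsWithin_univ] using (isLittleO_insert (s := {a}ᶜ) hPa).2 h

theorem IsLittleO.exists_forall_le_norm_imp_le_mul {P : α → E} {Q : α → F} (hP : Continuous P)
    (h : P =o[cocompact α] Q) {η : ℝ} (hη : 0 < η) :
    ∃ B : ℝ≥0, ∀ s, (B : ℝ) ≤ ‖P s‖ → ‖P s‖ ≤ η * ‖Q s‖ := by
  obtain ⟨K, hK, hKP⟩ := mem_cocompact.1 (h.bound hη)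
  obtain ⟨C, hC⟩ := hK.exists_bound_of_continuousOn hP.continuousOn
  refine ⟨C.toNNReal + 1, fun s hs => hKP fun hsK => ?_⟩
  have := hC s hsK
  push_cast at hs
  linarith [Real.le_coe_toNNReal C]

end Asymptotics

namespace MeasureTheory

variable {α ι E F : Type*} {m : MeasurableSpace α} {μ : Measure α}
  [NormedAddCommGroup E] [NormedAddCommGroup F]

theorem eLpNorm_one_indicator_le_of_norm_le_mul {f : α → E} {g : α → F} {t : Set α} {η : ℝ}
    (h : ∀ x ∈ t, ‖f x‖ ≤ η * ‖g x‖) :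
    eLpNorm (t.indicator f) 1 μ ≤ ENNReal.ofReal η * ∫⁻ x, ‖g x‖ₑ ∂μ := by
  rw [eLpNorm_one_eq_lintegral_enorm, ← lintegral_const_mul' _ _ ENNReal.ofReal_ne_top]
  refine lintegral_mono fun x => ?_
  by_cases hx : x ∈ t
  · rw [Set.indicator_of_mem hx, ← ofReal_norm, ← ofReal_norm, ← ENNReal.ofReal_mul' (norm_nonneg _)]
    exact ENNReal.ofReal_le_ofReal (h x hx)
  · simp [hx]

theorem eLpNorm_one_le_lintegral_add_mul_measure {f : α → E} {g : α → F} {s : Set α} {B : ℝ≥0}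
    (hB : ∀ x, (B : ℝ) ≤ ‖f x‖ → ‖f x‖ ≤ ‖g x‖) (hs : ∀ x ∉ s, ‖f x‖ ≤ ‖g x‖) :
    eLpNorm f 1 μ ≤ ∫⁻ x, ‖g x‖ₑ ∂μ + B * μ s := by
  have hs' := measurableSet_toMeasurable μ s
  calc eLpNorm f 1 μ = ∫⁻ x, ‖f x‖ₑ ∂μ := eLpNorm_one_eq_lintegral_enorm
    _ ≤ ∫⁻ x, ‖g x‖ₑ + (toMeasurable μ s).indicator (fun _ => (B : ℝ≥0∞)) x ∂μ := by
      refine lintegral_mono fun x => ?_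
      by_cases hx : x ∈ toMeasurable μ s
      · rw [Set.indicator_of_mem hx]
        rcases le_or_gt (B : ℝ) ‖f x‖ with hfx | hfx
        · exact (enorm_le_iff_norm_le.2 (hB x hfx)).trans le_self_add
        · exact le_add_left (enorm_le_coe.2 hfx.le)
      · rw [Set.indicator_of_notMem hx, add_zero]
        exact enorm_le_iff_norm_le.2 (hs x fun hxs => hx (subset_toMeasurable μ s hxs))
    _ = ∫⁻ x, ‖g x‖ₑ ∂μ + B * μ s := by
      rw [lintegral_add_right' _ (aemeasurable_const.indicator hs'), lintegral_indicator_const hs',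
        measure_toMeasurable]

section UniformL1Bound

variable {f : ι → α → E} {g : ι → α → F} {C : ℝ≥0∞}

theorem exists_pos_forall_eLpNorm_indicator_le (hg : ∀ i, ∫⁻ x, ‖g i x‖ₑ ∂μ ≤ C) (hC : C ≠ ∞)
    {ε : ℝ≥0∞} (hε : 0 < ε) : ∃ η : ℝ, 0 < η ∧ ∀ i (t : Set α),
      (∀ x ∈ t, ‖f i x‖ ≤ η * ‖g i x‖) → eLpNorm (t.indicator (f i)) 1 μ ≤ ε := by
  obtain ⟨η, hη, hηC⟩ := ENNReal.exists_nnreal_pos_mul_lt hC hε.ne'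
  refine ⟨η, hη, fun i t ht => (eLpNorm_one_indicator_le_of_norm_le_mul ht).trans ?_⟩
  rw [ENNReal.ofReal_coe_nnreal]
  exact (mul_le_mul_right (hg i) _).trans hηC.le

theorem unifIntegrable_one_of_forall_le_norm_imp_le_mul (hf : ∀ i, AEStronglyMeasurable (f i) μ)
    (hg : ∀ i, ∫⁻ x, ‖g i x‖ₑ ∂μ ≤ C) (hC : C ≠ ∞)
    (hlarge : ∀ η : ℝ, 0 < η → ∃ B : ℝ≥0, ∀ i x, (B : ℝ) ≤ ‖f i x‖ → ‖f i x‖ ≤ η * ‖g i x‖) :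
    UnifIntegrable f 1 μ := by
  refine unifIntegrable_of le_rfl ENNReal.one_ne_top hf fun ε hε => ?_
  obtain ⟨η, hη, hsmall⟩ :=
    exists_pos_forall_eLpNorm_indicator_le (f := f) hg hC (ENNReal.ofReal_pos.2 hε)
  obtain ⟨B, hB⟩ := hlarge η hη
  exact ⟨B, fun i => hsmall i _ fun x hx => hB i x hx⟩

theorem unifTight_one_of_forall_notMem_le_mul (hg : ∀ i, ∫⁻ x, ‖g i x‖ₑ ∂μ ≤ C) (hC : C ≠ ∞)
    (hfar : ∀ η : ℝ, 0 < η → ∃ s : Set α, μ s ≠ ∞ ∧ ∀ i, ∀ x ∉ s, ‖f i x‖ ≤ η * ‖g i x‖) :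
    UnifTight f 1 μ := by
  intro ε hε
  obtain ⟨η, hη, hsmall⟩ :=
    exists_pos_forall_eLpNorm_indicator_le (f := f) hg hC (ENNReal.coe_pos.2 hε)
  obtain ⟨s, hs, hfs⟩ := hfar η hη
  exact ⟨s, hs, fun i => hsmall i _ (hfs i)⟩

end UniformL1Bound

section Sequence

variable {f : ℕ → α → E} {g : ℕ → α → F} {w : α → E} {C : ℝ≥0∞}

theorem memLp_one_of_tendsto_ae (hf : ∀ n, AEStronglyMeasurable (f n) μ)
    (hg : ∀ n, ∫⁻ x, ‖g n x‖ₑ ∂μ ≤ C) (hC : C ≠ ∞)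
    {B : ℝ≥0} (hB : ∀ n x, (B : ℝ) ≤ ‖f n x‖ → ‖f n x‖ ≤ ‖g n x‖)
    {s : Set α} (hs : μ s ≠ ∞) (hfs : ∀ n, ∀ x ∉ s, ‖f n x‖ ≤ ‖g n x‖)
    (hae : ∀ᵐ x ∂μ, Tendsto (fun n => f n x) atTop (𝓝 (w x))) : MemLp w 1 μ := by
  refine ⟨aestronglyMeasurable_of_tendsto_ae atTop hf hae, ?_⟩
  have hbound : ∀ n, eLpNorm (f n) 1 μ ≤ C + B * μ s := fun n =>
    (eLpNorm_one_le_lintegral_add_mul_measure (hB n) (hfs n)).trans (add_le_add_left (hg n) _)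
  exact (Lp.eLpNorm_le_of_ae_tendsto (.of_forall hbound) hf hae).trans_lt
    (ENNReal.add_lt_top.2 ⟨hC.lt_top, ENNReal.mul_lt_top ENNReal.coe_lt_top hs.lt_top⟩)

theorem tendsto_eLpNorm_one_sub_of_forall_norm_le_mul (hf : ∀ n, AEStronglyMeasurable (f n) μ)
    (hg : ∀ n, ∫⁻ x, ‖g n x‖ₑ ∂μ ≤ C) (hC : C ≠ ∞)
    (hlarge : ∀ η : ℝ, 0 < η → ∃ B : ℝ≥0, ∀ n x, (B : ℝ) ≤ ‖f n x‖ → ‖f n x‖ ≤ η * ‖g n x‖)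
    (hfar : ∀ η : ℝ, 0 < η → ∃ s : Set α, μ s ≠ ∞ ∧ ∀ n, ∀ x ∉ s, ‖f n x‖ ≤ η * ‖g n x‖)
    (hae : ∀ᵐ x ∂μ, Tendsto (fun n => f n x) atTop (𝓝 (w x))) :
    Tendsto (fun n => eLpNorm (f n - w) 1 μ) atTop (𝓝 0) := by
  obtain ⟨B, hB⟩ := hlarge 1 one_pos
  obtain ⟨s, hs, hfs⟩ := hfar 1 one_pos
  simp only [one_mul] at hB hfs
  exact tendsto_Lp_of_tendsto_ae le_rfl ENNReal.one_ne_top hf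
    (memLp_one_of_tendsto_ae hf hg hC hB hs hfs hae)
    (unifIntegrable_one_of_forall_le_norm_imp_le_mul hf hg hC hlarge)
    (unifTight_one_of_forall_notMem_le_mul hg hC hfar) hae

end Sequence

theorem exists_measure_ne_top_forall_notMem_norm_comp_le_mul {X : Type*} [NormedAddCommGroup X]
    [ProperSpace X] [MeasurableSpace X] (μ : Measure X) [IsFiniteMeasureOnCompacts μ]
    {P : ℝ → E} {Q : ℝ → F} (h : P =o[𝓝 0] Q) {v : ι → X → ℝ}
    (hv : ∀ ε : ℝ, 0 < ε → ∃ R : ℝ, ∀ i x, R ≤ ‖x‖ → |v i x| ≤ ε) {η : ℝ} (hη : 0 < η) :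
    ∃ s : Set X, μ s ≠ ∞ ∧ ∀ i, ∀ x ∉ s, ‖P (v i x)‖ ≤ η * ‖Q (v i x)‖ := by
  obtain ⟨δ, hδ, hPQ⟩ := Metric.nhds_basis_closedBall.eventually_iff.1 (h.bound hη)
  obtain ⟨R, hR⟩ := hv δ hδ
  refine ⟨Metric.ball 0 R, measure_ball_lt_top.ne, fun i x hx => hPQ ?_⟩
  rw [Metric.mem_closedBall, Real.dist_eq, sub_zero]
  exact hR i x (by simpa using hx)

end MeasureTheory

theorem strauss_compactness_global_general
    (N : ℕ) (P Q : ℝ → ℝ)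
    (hP : Continuous P) (hQ : Continuous Q)
    (hQne : ∃ M : ℝ, ∀ s : ℝ, M ≤ |s| → Q s ≠ 0)
    (hlim : Tendsto (fun s => P s / Q s) (cocompact ℝ) (nhds 0))
    (hQne0 : ∃ δ : ℝ, 0 < δ ∧ ∀ s : ℝ, s ≠ 0 → |s| ≤ δ → Q s ≠ 0)
    (hlim0 : Tendsto (fun s => P s / Q s) (nhdsWithin 0 {(0:ℝ)}ᶜ) (nhds 0))
    (v : ℕ → EuclideanSpace ℝ (Fin N) → ℝ) (w : EuclideanSpace ℝ (Fin N) → ℝ)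
    (hv : ∀ n, Measurable (v n))
    (hbound : ∃ C : ℝ≥0∞, C < ⊤ ∧
      ∀ n, (∫⁻ x : EuclideanSpace ℝ (Fin N), ENNReal.ofReal |Q (v n x)|) ≤ C)
    (hae : ∀ᵐ x : EuclideanSpace ℝ (Fin N),
      Tendsto (fun n => P (v n x)) atTop (nhds (w x)))
    (hdecay : ∀ ε : ℝ, 0 < ε → ∃ R : ℝ, 0 < R ∧
      ∀ n, ∀ x : EuclideanSpace ℝ (Fin N), R ≤ ‖x‖ → |v n x| ≤ ε) :
    Tendsto (fun n => ∫⁻ x : EuclideanSpace ℝ (Fin N),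
      ENNReal.ofReal |P (v n x) - w x|) atTop (nhds 0) := by
  obtain ⟨C, hC, hQC⟩ := hbound
  obtain ⟨M, hM⟩ := hQne
  obtain ⟨δ, hδ, hQδ⟩ := hQne0
  have hQ_cocompact : ∀ᶠ s in cocompact ℝ, Q s = 0 → P s = 0 :=
    (tendsto_norm_cocompact_atTop.eventually_ge_atTop M).mono fun s hs h0 => (hM s hs h0).elim
  have hQ_punctured : ∀ᶠ s in 𝓝[≠] (0 : ℝ), Q s = 0 → P s = 0 := by
    filter_upwards [self_mem_nhdsWithin, nhdsWithin_le_nhds (Metric.closedBall_mem_nhds 0 hδ)]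
      with s hs0 hsδ h0
    exact (hQδ s hs0 (by simpa using hsδ) h0).elim
  have hinf : P =o[cocompact ℝ] Q := (isLittleO_iff_tendsto' hQ_cocompact).2 hlim
  have hzero : P =o[𝓝 0] Q := ((isLittleO_iff_tendsto' hQ_punctured).2 hlim0).nhds_of_nhdsNE
    hP.continuousAt hQ.continuousAt
  have hL1 := tendsto_eLpNorm_one_sub_of_forall_norm_le_mul (μ := volume)
    (f := fun n x => P (v n x)) (g := fun n x => Q (v n x))
    (fun n => (hP.measurable.comp (hv n)).aestronglyMeasurable)
    (by simpa only [Real.enorm_eq_ofReal_abs] using hQC) hC.ne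
    (fun η hη => (hinf.exists_forall_le_norm_imp_le_mul hP hη).imp fun B hB n x => hB (v n x))
    (fun η hη => exists_measure_ne_top_forall_notMem_norm_comp_le_mul volume hzero
      (fun ε hε => (hdecay ε hε).imp fun R hR => hR.2) hη) hae
  simpa only [eLpNorm_one_eq_lintegral_enorm, Real.enorm_eq_ofReal_abs, Pi.sub_apply] using hL1

/-- Strauss compactness lemma, second part (Lemma 3.6): if in addition
`P(s)/Q(s) → 0` as `s → 0` and `supₙ |vₙ(x)| → 0` as `|x| → ∞`, then
`P(vₙ) → v` in `L¹(ℝᴺ)`. -/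
theorem strauss_compactness_global
    (N : ℕ) (hN : 1 ≤ N) (P Q : ℝ → ℝ)
    (hP : Continuous P) (hQ : Continuous Q)
    (hQne : ∃ M : ℝ, ∀ s : ℝ, M ≤ |s| → Q s ≠ 0)
    (hlim : Tendsto (fun s => P s / Q s) (cocompact ℝ) (nhds 0))
    (hQne0 : ∃ δ : ℝ, 0 < δ ∧ ∀ s : ℝ, s ≠ 0 → |s| ≤ δ → Q s ≠ 0)
    (hlim0 : Tendsto (fun s => P s / Q s) (nhdsWithin 0 {(0:ℝ)}ᶜ) (nhds 0))
    (v : ℕ → EuclideanSpace ℝ (Fin N) → ℝ) (w : EuclideanSpace ℝ (Fin N) → ℝ)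
    (hv : ∀ n, Measurable (v n)) (hw : Measurable w)
    (hbound : ∃ C : ℝ≥0∞, C < ⊤ ∧
      ∀ n, (∫⁻ x : EuclideanSpace ℝ (Fin N), ENNReal.ofReal |Q (v n x)|) ≤ C)
    (hae : ∀ᵐ x : EuclideanSpace ℝ (Fin N),
      Tendsto (fun n => P (v n x)) atTop (nhds (w x)))
    (hdecay : ∀ ε : ℝ, 0 < ε → ∃ R : ℝ, 0 < R ∧
      ∀ n, ∀ x : EuclideanSpace ℝ (Fin N), R ≤ ‖x‖ → |v n x| ≤ ε) :
    Tendsto (fun n => ∫⁻ x : EuclideanSpace ℝ (Fin N),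
      ENNReal.ofReal |P (v n x) - w x|) atTop (nhds 0) :=
  strauss_compactness_global_general N P Q hP hQ hQne hlim hQne0 hlim0 v w hv hbound hae hdecay
end

section
/- Let φ : [0,∞) → ℝ be twice continuously differentiable and suppose there exist constants 0 < φ₀ < φ₁ and C > 0 such that for all s ≥ 0: φ₀ ≤ φ(s) ≤ φ₁, s·|φ'(s)| ≤ C, φ(s) + 2s·φ'(s) ≥ φ₀, s²·|φ''(s)| ≤ C, 3φ'(s) + 2s·|φ''(s)| ≤ 0, and φ(s) + 5s·φ'(s) − 2s²·|φ''(s)| ≥ 0. Then for every fixed s ∈ ℝ, the function b ↦ J₁(s,b) := φ((s² + b²)/2)·b² is monotone increasing and convex on [0,∞). -/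
open Set

/-- Lemma 6.1(i): under conditions (φ1), (φ3), (φ4), for each fixed `s` the
function `b ↦ J₁(s,b) = φ((s²+b²)/2)·b²` is monotone increasing and convex on
`[0,∞)`. -/
theorem J1_monotone_convex
    (φ φ' φ'' : ℝ → ℝ) (φ₀ φ₁ C : ℝ)
    (hφ₀ : 0 < φ₀) (hφ₀₁ : φ₀ < φ₁) (hC : 0 < C)
    (hderiv : ∀ s ∈ Set.Ici (0:ℝ), HasDerivWithinAt φ (φ' s) (Set.Ici 0) s)
    (hderiv2 : ∀ s ∈ Set.Ici (0:ℝ), HasDerivWithinAt φ' (φ'' s) (Set.Ici 0) s)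
    (hderivcont : ContinuousOn φ'' (Set.Ici 0))
    (hbnd : ∀ s ∈ Set.Ici (0:ℝ), φ₀ ≤ φ s ∧ φ s ≤ φ₁)
    (hd1 : ∀ s ∈ Set.Ici (0:ℝ), s * |φ' s| ≤ C)
    (hphi3 : ∀ s ∈ Set.Ici (0:ℝ), φ₀ ≤ φ s + 2 * s * φ' s)
    (hd2 : ∀ s ∈ Set.Ici (0:ℝ), s ^ 2 * |φ'' s| ≤ C)
    (hphi4a : ∀ s ∈ Set.Ici (0:ℝ), 3 * φ' s + 2 * s * |φ'' s| ≤ 0)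
    (hphi4b : ∀ s ∈ Set.Ici (0:ℝ), 0 ≤ φ s + 5 * s * φ' s - 2 * s ^ 2 * |φ'' s|) :
    ∀ s : ℝ,
      MonotoneOn (fun b : ℝ => φ ((s ^ 2 + b ^ 2) / 2) * b ^ 2) (Set.Ici 0) ∧
      ConvexOn ℝ (Set.Ici 0) (fun b : ℝ => φ ((s ^ 2 + b ^ 2) / 2) * b ^ 2) := by
  intro s
  set u : ℝ → ℝ := fun b => (s ^ 2 + b ^ 2) / 2 with hu
  have hu_nonneg : ∀ b : ℝ, 0 ≤ u b := fun b => by positivity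
  have hu_mem : ∀ b : ℝ, u b ∈ Set.Ici (0:ℝ) := fun b => hu_nonneg b
  -- derivative of u
  have huderiv : ∀ b : ℝ, HasDerivAt u b b := by
    intro b
    have h : HasDerivAt (fun b : ℝ => (s ^ 2 + b ^ 2) / 2) ((0 + 2 * b ^ 1) / 2) b := by
      exact (((hasDerivAt_pow 2 b).const_add (s ^ 2)).div_const 2).congr_deriv (by push_cast; ring)
    simpa using h.congr_deriv (by ring)
  -- at b > 0, u b > 0 so within-derivatives become full derivatives
  have huniv : ∀ b : ℝ, 0 < b → Set.Ici (0:ℝ) ∈ nhds (u b) := by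
    intro b hb
    have : 0 < u b := by simp only [hu]; positivity
    exact Ici_mem_nhds this
  have hφat : ∀ b : ℝ, 0 < b → HasDerivAt φ (φ' (u b)) (u b) := fun b hb =>
    (hderiv _ (hu_mem b)).hasDerivAt (huniv b hb)
  have hφ'at : ∀ b : ℝ, 0 < b → HasDerivAt φ' (φ'' (u b)) (u b) := fun b hb =>
    (hderiv2 _ (hu_mem b)).hasDerivAt (huniv b hb)
  set g : ℝ → ℝ := fun b => φ (u b) * b ^ 2 with hg
  set g' : ℝ → ℝ := fun b => φ' (u b) * b ^ 3 + 2 * b * φ (u b) with hg'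
  set g'' : ℝ → ℝ := fun b => φ'' (u b) * b ^ 4 + 5 * b ^ 2 * φ' (u b) + 2 * φ (u b) with hg''
  have hgderiv : ∀ b ∈ Set.Ioi (0:ℝ), HasDerivAt g (g' b) b := by
    intro b hb
    have h1 : HasDerivAt (fun b => φ (u b)) (φ' (u b) * b) b := (hφat b hb).comp b (huderiv b)
    have := h1.mul (hasDerivAt_pow 2 b)
    refine this.congr_deriv ?_
    simp only [hg']; push_cast; ring
  have hg'deriv : ∀ b ∈ Set.Ioi (0:ℝ), HasDerivAt g' (g'' b) b := by
    intro b hb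
    have h1 : HasDerivAt (fun b => φ' (u b)) (φ'' (u b) * b) b := (hφ'at b hb).comp b (huderiv b)
    have h2 : HasDerivAt (fun b => φ (u b)) (φ' (u b) * b) b := (hφat b hb).comp b (huderiv b)
    have h3 := (h1.mul (hasDerivAt_pow 3 b)).add
      (((hasDerivAt_id b).const_mul 2).mul h2)
    refine h3.congr_deriv ?_
    simp only [hg'', id_eq]; push_cast; ring
  -- continuity of g on Ici 0
  have hφcont : ContinuousOn φ (Set.Ici 0) := fun x hx => (hderiv x hx).continuousWithinAt
  have hucont : ContinuousOn u (Set.Ici 0) := by fun_prop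
  have hgcont : ContinuousOn g (Set.Ici 0) := by
    exact ((hφcont.comp hucont (fun x _ => hu_mem x)).mul (by fun_prop))
  -- key pointwise estimates
  have hkey : ∀ b : ℝ, 0 ≤ b → 0 ≤ g' b ∧ 0 ≤ g'' b := by
    intro b hb
    have hub := hu_mem b
    have hb2 : b ^ 2 ≤ 2 * u b := by simp only [hu]; nlinarith [sq_nonneg s]
    have hp'le : φ' (u b) ≤ 0 := by
      have h4a := hphi4a _ hub
      have habs : 0 ≤ u b * |φ'' (u b)| := mul_nonneg (hu_nonneg b) (abs_nonneg _)
      linarith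
    have h3 := hphi3 _ hub
    have hbl := (hbnd _ hub).1
    constructor
    · have hbr : 0 ≤ 2 * φ (u b) + b ^ 2 * φ' (u b) := by
        nlinarith [mul_le_mul_of_nonpos_right hb2 hp'le]
      have : g' b = b * (2 * φ (u b) + b ^ 2 * φ' (u b)) := by simp only [hg']; ring
      rw [this]; exact mul_nonneg hb hbr
    · have h4b := hphi4b _ hub
      have habs : -|φ'' (u b)| ≤ φ'' (u b) := neg_abs_le _
      have habs0 : 0 ≤ |φ'' (u b)| := abs_nonneg _
      have hb4 : b ^ 4 ≤ 4 * (u b) ^ 2 := by nlinarith [sq_nonneg b, hu_nonneg b]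
      simp only [hg'']
      have h5 : 2 * u b * φ' (u b) ≤ b ^ 2 * φ' (u b) :=
        mul_le_mul_of_nonpos_right hb2 hp'le
      have h6 : b ^ 4 * |φ'' (u b)| ≤ 4 * u b ^ 2 * |φ'' (u b)| :=
        mul_le_mul_of_nonneg_right hb4 habs0
      have h7 : -|φ'' (u b)| * b ^ 4 ≤ φ'' (u b) * b ^ 4 :=
        mul_le_mul_of_nonneg_right habs (by positivity)
      nlinarith [h5, h6, h7]
  have hint : interior (Set.Ici (0:ℝ)) = Set.Ioi 0 := interior_Ici
  constructor
  · refine monotoneOn_of_hasDerivWithinAt_nonneg (convex_Ici 0) hgcont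
      (f' := g') (fun x hx => ?_) (fun x hx => ?_)
    · rw [hint] at hx ⊢
      exact (hgderiv x hx).hasDerivWithinAt
    · rw [hint] at hx
      exact (hkey x (le_of_lt hx)).1
  · refine convexOn_of_hasDerivWithinAt2_nonneg (convex_Ici 0) hgcont
      (f' := g') (f'' := g'') (fun x hx => ?_) (fun x hx => ?_) (fun x hx => ?_)
    · rw [hint] at hx ⊢
      exact (hgderiv x hx).hasDerivWithinAt
    · rw [hint] at hx ⊢
      exact (hg'deriv x hx).hasDerivWithinAt
    · rw [hint] at hx
      exact (hkey x (le_of_lt hx)).2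
end

section
/- Let N ≥ 3 be an integer and let φ : [0,∞) → ℝ be twice continuously differentiable with, for all s ≥ 0: φ(s) ≥ φ₀ > 0, φ'(s) ≤ 0, φ(s) + 2s·φ'(s) ≥ φ₀, and 3φ'(s) + 2s·|φ''(s)| ≤ 0. Then for all u ∈ ℝ and all vectors p, ξ ∈ ℝᴺ, setting σ = (u² + ‖p‖²)/2, it holds that ((N−4)/N)·φ'(σ)·⟨p,ξ⟩² − (1/N)·φ''(σ)·‖p‖²·⟨p,ξ⟩² + ((N−2)/N)·φ(σ)·‖ξ‖² − (1/N)·φ'(σ)·‖p‖²·‖ξ‖² ≥ ((N−2)/N)·φ₀·‖ξ‖². -/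
open scoped RealInnerProductSpace

/-- Uniform ellipticity of the auxiliary operator `Ã` (Step 2 of
Proposition 6.2): under conditions (φ1), (φ3), (φ4), setting
`σ = (u² + ‖p‖²)/2`, one has
`((N−4)/N)φ'(σ)⟨p,ξ⟩² − (1/N)φ''(σ)‖p‖²⟨p,ξ⟩² + ((N−2)/N)φ(σ)‖ξ‖²
  − (1/N)φ'(σ)‖p‖²‖ξ‖² ≥ ((N−2)/N)φ₀‖ξ‖²`. -/
theorem auxiliary_ellipticity
    (N : ℕ) (hN : 3 ≤ N)
    (φ φ' φ'' : ℝ → ℝ) (φ₀ : ℝ) (hφ₀ : 0 < φ₀)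
    (hderiv : ∀ s ∈ Set.Ici (0:ℝ), HasDerivWithinAt φ (φ' s) (Set.Ici 0) s)
    (hderiv2 : ∀ s ∈ Set.Ici (0:ℝ), HasDerivWithinAt φ' (φ'' s) (Set.Ici 0) s)
    (hderivcont : ContinuousOn φ'' (Set.Ici 0))
    (hlow : ∀ s ∈ Set.Ici (0:ℝ), φ₀ ≤ φ s)
    (hneg : ∀ s ∈ Set.Ici (0:ℝ), φ' s ≤ 0)
    (hphi3 : ∀ s ∈ Set.Ici (0:ℝ), φ₀ ≤ φ s + 2 * s * φ' s)
    (hphi4a : ∀ s ∈ Set.Ici (0:ℝ), 3 * φ' s + 2 * s * |φ'' s| ≤ 0) :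
    ∀ (u : ℝ) (p ξ : EuclideanSpace ℝ (Fin N)),
      (((N : ℝ) - 2) / (N : ℝ)) * φ₀ * ‖ξ‖ ^ 2 ≤
        (((N : ℝ) - 4) / (N : ℝ)) * φ' ((u ^ 2 + ‖p‖ ^ 2) / 2) * ⟪p, ξ⟫ ^ 2 -
          (1 / (N : ℝ)) * φ'' ((u ^ 2 + ‖p‖ ^ 2) / 2) * ‖p‖ ^ 2 * ⟪p, ξ⟫ ^ 2 +
          (((N : ℝ) - 2) / (N : ℝ)) * φ ((u ^ 2 + ‖p‖ ^ 2) / 2) * ‖ξ‖ ^ 2 -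
          (1 / (N : ℝ)) * φ' ((u ^ 2 + ‖p‖ ^ 2) / 2) * ‖p‖ ^ 2 * ‖ξ‖ ^ 2 := by

  intro u p ξ
  set σ : ℝ := (u ^ 2 + ‖p‖ ^ 2) / 2 with hσdef
  have hσ : (0:ℝ) ≤ σ := by positivity
  have hσmem : σ ∈ Set.Ici (0:ℝ) := hσ
  set a := φ σ
  set b := φ' σ
  set c := φ'' σ
  have hNpos : (0:ℝ) < (N:ℝ) := by exact_mod_cast Nat.lt_of_lt_of_le (by norm_num) hN
  have hN3 : (3:ℝ) ≤ (N:ℝ) := by exact_mod_cast hN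
  have hb : b ≤ 0 := hneg σ hσmem
  have ha : φ₀ ≤ a + 2 * σ * b := hphi3 σ hσmem
  have habs : 3 * b + 2 * σ * |c| ≤ 0 := hphi4a σ hσmem
  have hc1 : c ≤ |c| := le_abs_self c
  have hc2 : -c ≤ |c| := neg_le_abs c
  have hcnn : 0 ≤ |c| := abs_nonneg c
  set P := ‖p‖ ^ 2 with hPdef
  set Q := ‖ξ‖ ^ 2 with hQdef
  set t := ⟪p, ξ⟫ ^ 2 with htdef
  have hP0 : (0:ℝ) ≤ P := by positivity
  have hQ0 : (0:ℝ) ≤ Q := by positivity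
  have ht0 : (0:ℝ) ≤ t := by positivity
  have hP2σ : P ≤ 2 * σ := by
    have : (0:ℝ) ≤ u ^ 2 := sq_nonneg u
    simp only [hσdef, hPdef]; linarith
  have htPQ : t ≤ P * Q := by
    have h := abs_real_inner_le_norm p ξ
    have h2 : |⟪p, ξ⟫| ^ 2 ≤ (‖p‖ * ‖ξ‖) ^ 2 := by
      apply pow_le_pow_left₀ (abs_nonneg _) h
    simpa [htdef, hPdef, hQdef, sq_abs, mul_pow] using h2
  have key : ((N:ℝ) - 2) * φ₀ * Q ≤
      ((N:ℝ) - 4) * b * t - c * P * t + ((N:ℝ) - 2) * a * Q - b * P * Q := by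
    have hstep1 : -(c * P * t) ≥ 3 * b * t := by
      have habs' : 2 * σ * |c| ≤ -(3 * b) := by linarith
      nlinarith [mul_le_mul_of_nonneg_right (mul_le_mul_of_nonneg_right hP2σ hcnn) ht0,
        mul_le_mul_of_nonneg_right habs' ht0,
        mul_le_mul_of_nonneg_right hc1 (mul_nonneg hP0 ht0)]
    have hstep2 : ((N:ℝ) - 1) * b * t ≥ ((N:ℝ) - 1) * b * (P * Q) := by
      have hNb : ((N:ℝ) - 1) * b ≤ 0 := mul_nonpos_of_nonneg_of_nonpos (by linarith) hb
      nlinarith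
    have haP : φ₀ ≤ a + b * P := by nlinarith [mul_nonpos_of_nonpos_of_nonneg hb (sub_nonneg.mpr hP2σ)]
    nlinarith [mul_le_mul_of_nonneg_left haP (mul_nonneg (show (0:ℝ) ≤ (N:ℝ)-2 by linarith) hQ0), mul_nonneg hQ0 (neg_nonneg.mpr hb)]
  have h2 := (div_le_div_iff_of_pos_right hNpos).mpr key
  calc ((N:ℝ) - 2) / N * φ₀ * Q = (((N:ℝ) - 2) * φ₀ * Q) / N := by ring
    _ ≤ (((N:ℝ) - 4) * b * t - c * P * t + ((N:ℝ) - 2) * a * Q - b * P * Q) / N := h2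
    _ = ((N:ℝ) - 4) / N * b * t - 1 / N * c * P * t + ((N:ℝ) - 2) / N * a * Q - 1 / N * b * P * Q := by ring
end

section
/- Let K > 0 and 0 ≤ α ≤ (√57 − 7)/4, and define φ(s) = K + (1+s)^{−α} for s ≥ 0. Then φ is twice continuously differentiable on [0,∞) and for all s ≥ 0: s²·|φ''(s)| ≤ α(α+1), 3φ'(s) + 2s·|φ''(s)| ≤ 0, and φ(s) + 5s·φ'(s) − 2s²·|φ''(s)| ≥ 0. -/
/-!
Write `u = 1 + s` and `w = u ^ (-α - 2) > 0`. Then `φ = K + u² w`, `φ' = -α u w` and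
`φ'' = α (α + 1) w ≥ 0`, so after dividing by `w` each inequality is
polynomial in `0 ≤ s ≤ u`.
The bound `α ≤ (√57 - 7) / 4` is exactly `2α² + 7α ≤ 1`, which makes
`u² - 5α s u - 2α(α + 1) s²` nonnegative.
-/

open Real Set Filter

section OneAddRpow

variable (p : ℝ) {x : ℝ}

lemma contDiffOn_one_add_rpow (n : WithTop ℕ∞) :
    ContDiffOn ℝ n (fun t : ℝ => (1 + t) ^ p) (Ioi (-1)) :=
  (contDiffOn_const.add contDiffOn_id).rpow_const_of_ne fun t (ht : -1 < t) =>
    (show 1 + t ≠ 0 by linarith)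

lemma hasDerivAt_one_add_rpow (hx : -1 < x) :
    HasDerivAt (fun t : ℝ => (1 + t) ^ p) (p * (1 + x) ^ (p - 1)) x := by
  simpa using
    ((hasDerivAt_id x).const_add 1).rpow_const (p := p) (Or.inl (show 1 + x ≠ 0 by linarith))

lemma deriv_one_add_rpow (hx : -1 < x) :
    deriv (fun t : ℝ => (1 + t) ^ p) x = p * (1 + x) ^ (p - 1) :=
  (hasDerivAt_one_add_rpow p hx).deriv

lemma deriv_deriv_one_add_rpow (hx : -1 < x) :
    deriv (deriv fun t : ℝ => (1 + t) ^ p) x = p * (p - 1) * (1 + x) ^ (p - 2) := by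
  have hderiv : deriv (fun t : ℝ => (1 + t) ^ p) =ᶠ[nhds x] fun t => p * (1 + t) ^ (p - 1) :=
    (eventually_gt_nhds hx).mono fun t ht => deriv_one_add_rpow p ht
  rw [hderiv.deriv_eq, ((hasDerivAt_one_add_rpow (p - 1) hx).const_mul p).deriv, sub_sub,
    one_add_one_eq_two, mul_assoc]

end OneAddRpow

lemma two_mul_sq_add_seven_mul_le_one {α : ℝ} (hα0 : 0 ≤ α) (hα : α ≤ (√57 - 7) / 4) :
    2 * α ^ 2 + 7 * α ≤ 1 := by
  have hsq : √57 ^ 2 = 57 := sq_sqrt (by norm_num)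
  nlinarith

lemma phi4_quadratic_nonneg {α s u : ℝ} (hα0 : 0 ≤ α) (hα : 2 * α ^ 2 + 7 * α ≤ 1)
    (hs : 0 ≤ s) (hsu : s ≤ u) :
    0 ≤ u ^ 2 - 5 * α * s * u - 2 * α * (α + 1) * s ^ 2 := by
  have hsplit : u ^ 2 - 5 * α * s * u - 2 * α * (α + 1) * s ^ 2
      = (1 - 7 * α - 2 * α ^ 2) * u ^ 2 + 5 * α * u * (u - s)
        + 2 * α * (α + 1) * (u - s) * (u + s) := by ring
  have hα' : 0 ≤ 1 - 7 * α - 2 * α ^ 2 := by linarith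
  have hu : 0 ≤ u := hs.trans hsu
  have hus : 0 ≤ u - s := by linarith
  rw [hsplit]
  exact add_nonneg (add_nonneg (mul_nonneg hα' (sq_nonneg u)) (mul_nonneg (by positivity) hus))
    (mul_nonneg (mul_nonneg (by positivity) hus) (by linarith))

/-- The model nonlinearity `φ(s) = K + (1+s)^(−α)` with `K > 0` and
`0 ≤ α ≤ (√57 − 7)/4` satisfies condition (φ4) of the paper:
`φ ∈ C²([0,∞))`, `s²|φ''(s)| ≤ α(α+1)`, `3φ'(s) + 2s|φ''(s)| ≤ 0` and
`φ(s) + 5sφ'(s) − 2s²|φ''(s)| ≥ 0` on `[0,∞)`. -/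
theorem model_phi_satisfies_phi4
    (K α : ℝ) (hK : 0 < K) (hα0 : 0 ≤ α) (hα : α ≤ (Real.sqrt 57 - 7) / 4)
    (φ : ℝ → ℝ) (hφdef : ∀ s : ℝ, φ s = K + (1 + s) ^ (-α)) :
    ContDiffOn ℝ 2 φ (Set.Ici 0) ∧
      ∀ s ∈ Set.Ici (0:ℝ),
        s ^ 2 * |deriv (deriv φ) s| ≤ α * (α + 1) ∧
        3 * deriv φ s + 2 * s * |deriv (deriv φ) s| ≤ 0 ∧
        0 ≤ φ s + 5 * s * deriv φ s - 2 * s ^ 2 * |deriv (deriv φ) s| := by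
  obtain rfl : φ = fun t => K + (1 + t) ^ (-α) := funext hφdef
  have hα_quad := two_mul_sq_add_seven_mul_le_one hα0 hα
  refine ⟨(contDiffOn_const.add (contDiffOn_one_add_rpow (-α) 2)).mono
    (Ici_subset_Ioi.mpr (by norm_num)), fun s (hs : 0 ≤ s) => ?_⟩
  have hs1 : -1 < s := by linarith
  rw [deriv_const_add', deriv_deriv_one_add_rpow _ hs1, deriv_one_add_rpow _ hs1,
    show -α * (-α - 1) = α * (α + 1) by ring]
  beta_reduce
  have hu : 0 < 1 + s := by linarith
  set u := 1 + s
  set w := u ^ (-α - 2) with hw_def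
  have hw : 0 < w := rpow_pos_of_pos hu _
  have hu_rpow_sub_one : u ^ (-α - 1) = u * w := by
    rw [hw_def, ← rpow_one_add' hu.le (by linarith)]; ring_nf
  have hu_rpow : u ^ (-α) = u ^ 2 * w := by
    rw [hw_def, ← rpow_natCast, ← rpow_add hu]; norm_num
  rw [abs_of_nonneg (by positivity), hu_rpow_sub_one]
  refine ⟨?_, ?_, ?_⟩
  · have hu_rpow_le : u ^ (-α) ≤ 1 :=
      rpow_le_one_of_one_le_of_nonpos (by linarith) (by linarith)
    have hsw : s ^ 2 * w ≤ 1 := by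
      rw [hu_rpow] at hu_rpow_le
      nlinarith [pow_le_pow_left₀ hs (show s ≤ u by linarith) 2]
    nlinarith [mul_nonneg hα0 (by linarith : (0:ℝ) ≤ α + 1)]
  · nlinarith [mul_nonneg (mul_nonneg hα0 hw.le) hs]
  · rw [hu_rpow]
    nlinarith [mul_nonneg hw.le (phi4_quadratic_nonneg hα0 hα_quad hs (by linarith : s ≤ u))]
end

section
/- Let X be a finite-dimensional real inner product space with inner product ⟨·,·⟩ and norm |·|. Let φ : [0,∞) → ℝ be continuous with φ(s) > 0 for all s ≥ 0, suppose the map t ↦ t·φ(t²/2) is strictly increasing on [0,∞), and let Φ(s) = ∫₀^s φ(τ) dτ. Then for all ξ, ζ ∈ X: Φ(|ξ|²/2) − Φ(|ζ|²/2) − φ(|ζ|²/2)·⟨ζ, ξ − ζ⟩ ≥ φ(|ζ|²/2)·(|ξ|·|ζ| − ⟨ξ,ζ⟩) ≥ 0. -/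
open intervalIntegral
open scoped RealInnerProductSpace

/-!
The radial profile `F t = Φ (t ^ 2 / 2)` has derivative `t * φ (t ^ 2 / 2)`, which is increasing
on `[0, ∞)`, so `F` is convex there and lies above its tangent at `‖ζ‖`:
`F ‖ξ‖ - F ‖ζ‖ ≥ ‖ζ‖ φ (‖ζ‖ ^ 2 / 2) (‖ξ‖ - ‖ζ‖)`. Since `⟪ζ, ξ - ζ⟫ = ⟪ξ, ζ⟫ - ‖ζ‖ ^ 2`, this is
the first inequality; the second is Cauchy–Schwarz.
-/

open Set

theorem mul_sub_le_sub_of_hasDerivAt_of_monotoneOn {D : Set ℝ} (hD : Convex ℝ D) {F f : ℝ → ℝ}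
    (hF : ∀ x ∈ D, HasDerivAt F (f x) x) (hf : MonotoneOn f D) {a b : ℝ} (ha : a ∈ D)
    (hb : b ∈ D) : f b * (a - b) ≤ F a - F b := by
  have hcont {s : Set ℝ} (hs : s ⊆ D) : ContinuousOn F s :=
    fun z hz => (hF z (hs hz)).continuousAt.continuousWithinAt
  have hdiff {s : Set ℝ} (hs : s ⊆ D) : DifferentiableOn ℝ F (interior s) :=
    fun z hz => (hF z (hs (interior_subset hz))).differentiableAt.differentiableWithinAt
  rcases le_total b a with hba | hab
  · have hI : Icc b a ⊆ D := hD.ordConnected.out hb ha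
    refine (convex_Icc b a).mul_sub_le_image_sub_of_le_deriv (hcont hI) (hdiff hI)
      (fun z hz => ?_) b (left_mem_Icc.2 hba) a (right_mem_Icc.2 hba) hba
    rw [interior_Icc] at hz
    have hzD : z ∈ D := hI (Ioo_subset_Icc_self hz)
    exact (hF z hzD).deriv ▸ hf hb hzD hz.1.le
  · have hI : Icc a b ⊆ D := hD.ordConnected.out ha hb
    have hFab := (convex_Icc a b).image_sub_le_mul_sub_of_deriv_le (hcont hI) (hdiff hI)
      (C := f b) (fun z hz => ?_) a (left_mem_Icc.2 hab) b (right_mem_Icc.2 hab) hab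
    · linarith
    rw [interior_Icc] at hz
    have hzD : z ∈ D := hI (Ioo_subset_Icc_self hz)
    exact (hF z hzD).deriv ▸ hf hzD hb hz.2.le

theorem hasDerivAt_integral_sq_half {φ : ℝ → ℝ} (hφ : ContinuousOn φ (Ici 0)) (t : ℝ) :
    HasDerivAt (fun t => ∫ τ in (0:ℝ)..t ^ 2 / 2, φ τ) (t * φ (t ^ 2 / 2)) t := by
  -- `φ ∘ max · 0` is continuous on all of `ℝ` and agrees with `φ` on `[0, t²/2]`.
  have hψ : Continuous fun x => φ (max x 0) :=
    hφ.comp_continuous (continuous_id.max continuous_const) fun x => le_max_right x 0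
  have heq : (fun t : ℝ => ∫ τ in (0:ℝ)..t ^ 2 / 2, φ τ) =
      fun t => ∫ τ in (0:ℝ)..t ^ 2 / 2, φ (max τ 0) := by
    funext t
    refine integral_congr fun τ hτ => ?_
    rw [uIcc_of_le (by positivity)] at hτ
    rw [max_eq_left hτ.1]
  have hsq : HasDerivAt (fun t : ℝ => t ^ 2 / 2) t t := by
    simpa using (hasDerivAt_pow 2 t).div_const 2
  have := (hψ.integral_hasStrictDerivAt 0 (t ^ 2 / 2)).hasDerivAt.comp t hsq
  rw [max_eq_left (by positivity : (0:ℝ) ≤ t ^ 2 / 2)] at this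
  rw [heq, mul_comm]
  exact this

theorem pointwise_convexity_estimate_general
    {X : Type*} [NormedAddCommGroup X] [InnerProductSpace ℝ X]
    (φ : ℝ → ℝ) (hφc : ContinuousOn φ (Set.Ici 0))
    (hφpos : ∀ s ∈ Set.Ici (0:ℝ), 0 < φ s)
    (hmono : StrictMonoOn (fun t : ℝ => t * φ (t ^ 2 / 2)) (Set.Ici 0))
    (Φ : ℝ → ℝ) (hΦ : ∀ s : ℝ, Φ s = ∫ τ in (0:ℝ)..s, φ τ) :
    ∀ ξ ζ : X,
      (φ (‖ζ‖ ^ 2 / 2) * (‖ξ‖ * ‖ζ‖ - ⟪ξ, ζ⟫) ≤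
        Φ (‖ξ‖ ^ 2 / 2) - Φ (‖ζ‖ ^ 2 / 2) - φ (‖ζ‖ ^ 2 / 2) * ⟪ζ, ξ - ζ⟫) ∧
      0 ≤ φ (‖ζ‖ ^ 2 / 2) * (‖ξ‖ * ‖ζ‖ - ⟪ξ, ζ⟫) := by
  intro ξ ζ
  have hradial := mul_sub_le_sub_of_hasDerivAt_of_monotoneOn (convex_Ici 0)
    (fun t _ => hasDerivAt_integral_sq_half hφc t) hmono.monotoneOn
    (norm_nonneg ξ) (norm_nonneg ζ)
  simp only [← hΦ] at hradial
  have hCS : ⟪ξ, ζ⟫ ≤ ‖ξ‖ * ‖ζ‖ := real_inner_le_norm ξ ζ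
  have hpos : 0 < φ (‖ζ‖ ^ 2 / 2) := hφpos _ (mem_Ici.2 (by positivity))
  have hinner : ⟪ζ, ξ - ζ⟫ = ⟪ξ, ζ⟫ - ‖ζ‖ ^ 2 := by
    rw [inner_sub_right, real_inner_comm, real_inner_self_eq_norm_sq]
  refine ⟨?_, mul_nonneg hpos.le (sub_nonneg.2 hCS)⟩
  rw [hinner]
  linarith

/-- Pointwise convexity estimate (Jeanjean–Rădulescu, Stuart) used in the
proof of Theorem 1.1: if `φ > 0` is continuous and `t ↦ tφ(t²/2)` is strictly
increasing on `[0,∞)`, then for all `ξ, ζ`,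
`Φ(|ξ|²/2) − Φ(|ζ|²/2) − φ(|ζ|²/2)⟨ζ, ξ−ζ⟩ ≥ φ(|ζ|²/2)(|ξ||ζ| − ⟨ξ,ζ⟩) ≥ 0`. -/
theorem pointwise_convexity_estimate
    {X : Type*} [NormedAddCommGroup X] [InnerProductSpace ℝ X]
    [FiniteDimensional ℝ X]
    (φ : ℝ → ℝ) (hφc : ContinuousOn φ (Set.Ici 0))
    (hφpos : ∀ s ∈ Set.Ici (0:ℝ), 0 < φ s)
    (hmono : StrictMonoOn (fun t : ℝ => t * φ (t ^ 2 / 2)) (Set.Ici 0))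
    (Φ : ℝ → ℝ) (hΦ : ∀ s : ℝ, Φ s = ∫ τ in (0:ℝ)..s, φ τ) :
    ∀ ξ ζ : X,
      (φ (‖ζ‖ ^ 2 / 2) * (‖ξ‖ * ‖ζ‖ - ⟪ξ, ζ⟫) ≤
        Φ (‖ξ‖ ^ 2 / 2) - Φ (‖ζ‖ ^ 2 / 2) - φ (‖ζ‖ ^ 2 / 2) * ⟪ζ, ξ - ζ⟫) ∧
      0 ≤ φ (‖ζ‖ ^ 2 / 2) * (‖ξ‖ * ‖ζ‖ - ⟪ξ, ζ⟫) :=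
  pointwise_convexity_estimate_general φ hφc hφpos hmono Φ hΦ
end
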